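/- Let A be a symmetric linear endomorphism of E having at least one positive and at least one negative eigenvalue and no zero eigenvalue. Let U be the sum of the eigenspaces of A corresponding to positive eigenvalues, m₊(A) the smallest positive eigenvalue of A, and m₋(A) the smallest positive eigenvalue of −A. Fix an integer ℓ with dim U ≤ ℓ ≤ dim E, and let K be a set of ℓ-dimensional subspaces of E such that { P_V : V ∈ K } is compact in the space of endomorphisms of E and every V ∈ K satisfies U ∩ V⊥ = 0. Then there exists a constant C > 0 such that δ(U, exp(tA)·V) ≤ C e^{−(m₊(A) + m₋(A)) t} for all V ∈ K and all t ≥ 0. -/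

import Mathlib

/-!
Write `U = posSpace A`. Since `U ⊓ Vᗮ = ⊥` forces `gap U V < 1` and the gap depends continuously
on `P_V`, compactness gives one `δ < 1` bounding `gap U V` on all of `K`. Then `P_U P_V` is
`δ`-close to the identity on `U`, so a Neumann series lifts every `u ∈ U` to some `v ∈ V` with
`P_U v = u` and `‖v‖ ≤ (1 - δ)⁻¹ ‖u‖`. For `y ∈ U`, lift `u = exp(-tA) y`, of norm at most
`e^{-m₊ t} ‖y‖`: then `exp(tA) v ∈ exp(tA) V`, and `y - exp(tA) v = exp(tA) (u - v)` with
`u - v ∈ Uᗮ`, where `exp(tA)` contracts by `e^{-m₋ t}`.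
-/

open Module Submodule

noncomputable section

variable {E : Type*} [NormedAddCommGroup E] [InnerProductSpace ℝ E] [FiniteDimensional ℝ E]

/-- The orthogonal projection onto a subspace `U`, viewed as a continuous linear
endomorphism of `E`. -/
noncomputable def projCLM (U : Submodule ℝ E) : E →L[ℝ] E :=
  U.subtypeL.comp (orthogonalProjection U)

/-- The gap `δ(U,V) := ‖P_U - P_V ∘ P_U‖` between two subspaces. -/
noncomputable def gap (U V : Submodule ℝ E) : ℝ :=
  ‖projCLM U - (projCLM V).comp (projCLM U)‖

/-- The exponential of a continuous linear endomorphism. -/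
noncomputable def expEnd {V : Type*} [NormedAddCommGroup V] [NormedSpace ℝ V]
    (B : V →L[ℝ] V) : V →L[ℝ] V :=
  NormedSpace.exp B

/-- The sum of the eigenspaces of `A` corresponding to positive eigenvalues. -/
noncomputable def posSpace (A : E →L[ℝ] E) : Submodule ℝ E :=
  ⨆ μ ∈ Set.Ioi (0 : ℝ), Module.End.eigenspace (A : E →ₗ[ℝ] E) μ

lemma projCLM_eq_starProjection (U : Submodule ℝ E) : projCLM U = U.starProjection := rfl

section Exponential

variable {X : Type*} [NormedAddCommGroup X] [NormedSpace ℝ X] [CompleteSpace X]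

lemma expEnd_apply_of_apply_eq_smul (B : X →L[ℝ] X) {c : ℝ} {x : X} (h : B x = c • x) :
    expEnd B x = Real.exp c • x := by
  have hpow : ∀ n : ℕ, (B ^ n) x = c ^ n • x := by
    intro n
    induction n with
    | zero => simp
    | succ n ih => rw [pow_succ', mul_apply_eq_comp, ih, map_smul, h, smul_smul, pow_succ]
  have hB :=
    (NormedSpace.exp_series_hasSum_exp' (𝕂 := ℝ) B).mapL (ContinuousLinearMap.apply ℝ X x)
  have hc := (NormedSpace.exp_series_hasSum_exp' (𝕂 := ℝ) c).smul_const x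
  rw [← Real.exp_eq_exp_ℝ] at hc
  refine hB.unique ?_
  convert hc using 2 with n
  simp [hpow, smul_smul]

lemma expEnd_smul_apply_of_apply_eq_smul {B : X →L[ℝ] X} {c : ℝ} {x : X} (h : B x = c • x)
    (s : ℝ) : expEnd (s • B) x = Real.exp (s * c) • x :=
  expEnd_apply_of_apply_eq_smul _ (by rw [smul_apply, h, smul_smul])

lemma expEnd_smul_expEnd_neg_smul_apply (B : X →L[ℝ] X) (t : ℝ) (x : X) :
    expEnd (t • B) (expEnd ((-t) • B) x) = x := by
  -- `NormedSpace.exp_add_of_commute` needs a `NormedAlgebra ℚ` instance that `X →L[ℝ] X` lacks.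
  have hball : ∀ C : X →L[ℝ] X,
      C ∈ Metric.eball 0 (NormedSpace.expSeries ℝ (X →L[ℝ] X)).radius := fun C =>
    (NormedSpace.expSeries_radius_eq_top ℝ (X →L[ℝ] X)).symm ▸ edist_lt_top _ _
  rw [expEnd, expEnd, ← mul_apply_eq_comp,
    ← NormedSpace.exp_add_of_commute_of_mem_ball (𝕂 := ℝ)
      (((Commute.refl B).smul_left t).smul_right (-t)) (hball _) (hball _),
    ← add_smul, add_neg_cancel, zero_smul, NormedSpace.exp_zero]
  rfl

end Exponential

section Eigenbasis

variable {X : Type*} [NormedAddCommGroup X] [InnerProductSpace ℝ X]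
  {ι : Type*} [Fintype ι] (b : OrthonormalBasis ι ℝ X)

lemma OrthonormalBasis.repr_apply_of_apply_eq_smul {F : X →ₗ[ℝ] X} {f : ι → ℝ}
    (hF : ∀ i, F (b i) = f i • b i) (x : X) (i : ι) : b.repr (F x) i = f i * b.repr x i := by
  classical
  conv_lhs => rw [← b.sum_repr x]
  simp [hF, smul_smul, Pi.single_apply, mul_comm]

lemma OrthonormalBasis.norm_apply_le_of_apply_eq_smul {F : X →ₗ[ℝ] X} {f : ι → ℝ}
    (hF : ∀ i, F (b i) = f i • b i) {x : X} {c : ℝ} (hc : 0 ≤ c)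
    (hfc : ∀ i, b.repr x i ≠ 0 → |f i| ≤ c) : ‖F x‖ ≤ c * ‖x‖ := by
  have hsq : ‖F x‖ ^ 2 ≤ (c * ‖x‖) ^ 2 := by
    rw [← b.repr.norm_map, ← b.repr.norm_map x, mul_pow, EuclideanSpace.norm_sq_eq,
      EuclideanSpace.norm_sq_eq, Finset.mul_sum]
    gcongr with i
    rw [b.repr_apply_of_apply_eq_smul hF, norm_mul, mul_pow]
    by_cases hi : b.repr x i = 0
    · simp [hi]
    · gcongr
      exact hfc i hi
  exact (sq_le_sq₀ (norm_nonneg _) (by positivity)).1 hsq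

variable {A : X →L[ℝ] X} {lam : ι → ℝ}

lemma OrthonormalBasis.repr_expEnd_smul [CompleteSpace X] (hb : ∀ i, A (b i) = lam i • b i)
    (s : ℝ) (x : X) (i : ι) : b.repr (expEnd (s • A) x) i = Real.exp (s * lam i) * b.repr x i :=
  b.repr_apply_of_apply_eq_smul (F := (expEnd (s • A) : X →ₗ[ℝ] X))
    (fun j => expEnd_smul_apply_of_apply_eq_smul (hb j) s) x i

lemma OrthonormalBasis.norm_expEnd_smul_apply_le [CompleteSpace X]
    (hb : ∀ i, A (b i) = lam i • b i) {s c : ℝ} {x : X} (h : ∀ i, b.repr x i ≠ 0 → s * lam i ≤ c) :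
    ‖expEnd (s • A) x‖ ≤ Real.exp c * ‖x‖ :=
  b.norm_apply_le_of_apply_eq_smul (F := (expEnd (s • A) : X →ₗ[ℝ] X))
    (fun j => expEnd_smul_apply_of_apply_eq_smul (hb j) s) (Real.exp_pos c).le
    fun i hi => by rw [Real.abs_exp]; exact Real.exp_le_exp.2 (h i hi)

lemma OrthonormalBasis.hasEigenvalue_of_apply_eq_smul (hb : ∀ i, A (b i) = lam i • b i)
    (i : ι) : Module.End.HasEigenvalue (A : X →ₗ[ℝ] X) (lam i) :=
  Module.End.hasEigenvalue_of_hasEigenvector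
    ⟨Module.End.mem_eigenspace_iff.2 (hb i), b.orthonormal.ne_zero i⟩

variable (A)

lemma eigenspace_le_posSpace {μ : ℝ} (hμ : 0 < μ) :
    Module.End.eigenspace (A : X →ₗ[ℝ] X) μ ≤ posSpace A :=
  le_biSup (fun μ => Module.End.eigenspace (A : X →ₗ[ℝ] X) μ) hμ

variable {A}

lemma mem_posSpace_iff_of_eigenbasis (hb : ∀ i, A (b i) = lam i • b i) {x : X} :
    x ∈ posSpace A ↔ ∀ i, lam i ≤ 0 → b.repr x i = 0 := by
  constructor
  · intro hx
    have hle : posSpace A ≤ ⨅ i, ⨅ (_ : lam i ≤ 0), LinearMap.ker (b.toBasis.coord i) := by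
      refine iSup₂_le fun μ hμ y hy => ?_
      simp only [Submodule.mem_iInf, LinearMap.mem_ker, Basis.coord_apply,
        OrthonormalBasis.coe_toBasis_repr_apply]
      intro i hi
      have h := b.repr_apply_of_apply_eq_smul (F := (A : X →ₗ[ℝ] X)) hb y i
      rw [Module.End.mem_eigenspace_iff.1 hy, map_smul, PiLp.smul_apply, smul_eq_mul] at h
      have hμi : μ - lam i ≠ 0 := by linarith [show (0 : ℝ) < μ from hμ]
      exact (mul_eq_zero.1 (by linarith : (μ - lam i) * b.repr y i = 0)).resolve_left hμi
    simpa using hle hx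
  · intro hx
    rw [← b.sum_repr x]
    refine Submodule.sum_mem _ fun i _ => ?_
    rcases le_or_gt (lam i) 0 with hi | hi
    · simp [hx i hi]
    · exact Submodule.smul_mem _ _
        (eigenspace_le_posSpace A hi (Module.End.mem_eigenspace_iff.2 (hb i)))

lemma repr_eq_zero_of_mem_orthogonal_posSpace (hb : ∀ i, A (b i) = lam i • b i) {x : X}
    (hx : x ∈ (posSpace A)ᗮ) {i : ι} (hi : 0 < lam i) : b.repr x i = 0 := by
  rw [b.repr_apply_apply]
  exact Submodule.inner_right_of_mem_orthogonal
    (eigenspace_le_posSpace A hi (Module.End.mem_eigenspace_iff.2 (hb i))) hx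

end Eigenbasis

lemma le_neg_of_isLeast_hasEigenvalue_neg {X : Type*} [AddCommGroup X] [Module ℝ X]
    {B : Module.End ℝ X} {mm μ : ℝ} (hzero : ¬ Module.End.HasEigenvalue B 0)
    (hmm : IsLeast {μ : ℝ | 0 < μ ∧ Module.End.HasEigenvalue (-B) μ} mm) (hμ : μ ≤ 0)
    (hμB : Module.End.HasEigenvalue B μ) : μ ≤ -mm := by
  have hμ0 : μ < 0 := hμ.lt_of_ne (by rintro rfl; exact hzero hμB)
  have := hmm.2 ⟨neg_pos.2 hμ0, Module.End.hasEigenvalue_neg_iff.2 (by rwa [neg_neg])⟩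
  linarith

section SelfAdjoint

variable {A : E →L[ℝ] E}

lemma IsSelfAdjoint.exists_orthonormalBasis_apply_eq_smul (hA : IsSelfAdjoint A) :
    ∃ (n : ℕ) (b : OrthonormalBasis (Fin n) ℝ E) (lam : Fin n → ℝ), ∀ i, A (b i) = lam i • b i :=
  have hA' := ContinuousLinearMap.isSelfAdjoint_iff_isSymmetric.mp hA
  ⟨_, hA'.eigenvectorBasis rfl, _, hA'.apply_eigenvectorBasis rfl⟩

lemma IsSelfAdjoint.expEnd_smul_mem_posSpace (hA : IsSelfAdjoint A) (s : ℝ) {y : E}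
    (hy : y ∈ posSpace A) : expEnd (s • A) y ∈ posSpace A := by
  obtain ⟨n, b, lam, hb⟩ := hA.exists_orthonormalBasis_apply_eq_smul
  rw [mem_posSpace_iff_of_eigenbasis b hb] at hy ⊢
  intro i hi
  rw [b.repr_expEnd_smul hb, hy i hi, mul_zero]

lemma IsSelfAdjoint.norm_expEnd_neg_smul_le_of_mem_posSpace (hA : IsSelfAdjoint A) {mp t : ℝ}
    (hmp : ∀ μ, 0 < μ → Module.End.HasEigenvalue (A : E →ₗ[ℝ] E) μ → mp ≤ μ) (ht : 0 ≤ t)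
    {y : E} (hy : y ∈ posSpace A) : ‖expEnd ((-t) • A) y‖ ≤ Real.exp (-(mp * t)) * ‖y‖ := by
  obtain ⟨n, b, lam, hb⟩ := hA.exists_orthonormalBasis_apply_eq_smul
  refine b.norm_expEnd_smul_apply_le hb fun i hi => ?_
  have hpos : 0 < lam i := by
    by_contra! h
    exact hi ((mem_posSpace_iff_of_eigenbasis b hb).1 hy i h)
  have := hmp _ hpos (b.hasEigenvalue_of_apply_eq_smul hb i)
  nlinarith

lemma IsSelfAdjoint.norm_expEnd_smul_le_of_mem_orthogonal_posSpace (hA : IsSelfAdjoint A)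
    {mm t : ℝ} (hmm : ∀ μ, μ ≤ 0 → Module.End.HasEigenvalue (A : E →ₗ[ℝ] E) μ → μ ≤ -mm)
    (ht : 0 ≤ t) {w : E} (hw : w ∈ (posSpace A)ᗮ) :
    ‖expEnd (t • A) w‖ ≤ Real.exp (-(mm * t)) * ‖w‖ := by
  obtain ⟨n, b, lam, hb⟩ := hA.exists_orthonormalBasis_apply_eq_smul
  refine b.norm_expEnd_smul_apply_le hb fun i hi => ?_
  have hnonpos : lam i ≤ 0 := by
    by_contra! h
    exact hi (repr_eq_zero_of_mem_orthogonal_posSpace b hb hw h)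
  have := hmm _ hnonpos (b.hasEigenvalue_of_apply_eq_smul hb i)
  nlinarith

end SelfAdjoint

section Gap

variable {U V W : Submodule ℝ E}

lemma norm_sub_starProjection_le_gap_mul {y : E} (hy : y ∈ U) :
    ‖y - V.starProjection y‖ ≤ gap U V * ‖y‖ := by
  simpa [gap, projCLM_eq_starProjection, Submodule.starProjection_eq_self_iff.2 hy] using
    (projCLM U - (projCLM V).comp (projCLM U)).le_opNorm y

lemma gap_le_of_forall_exists_norm_sub_le {c : ℝ} (hc : 0 ≤ c)
    (h : ∀ y ∈ U, ∃ w ∈ W, ‖y - w‖ ≤ c * ‖y‖) : gap U W ≤ c := by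
  refine ContinuousLinearMap.opNorm_le_bound _ hc fun x => ?_
  set y := U.starProjection x
  obtain ⟨w, hwW, hw⟩ := h y (U.starProjection_apply_mem x)
  calc ‖y - W.starProjection y‖ ≤ ‖y - w‖ := by
        rw [Submodule.starProjection_minimal]
        exact ciInf_le (f := fun z : W => ‖y - z‖)
          ⟨0, by rintro _ ⟨z, rfl⟩; positivity⟩ ⟨w, hwW⟩
    _ ≤ c * ‖y‖ := hw
    _ ≤ c * ‖x‖ := by gcongr; exact U.norm_starProjection_apply_le x

lemma gap_lt_one_of_inf_orthogonal_eq_bot (h : U ⊓ Vᗮ = ⊥) : gap U V < 1 := by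
  rw [gap, ← ContinuousLinearMap.sSup_unitClosedBall_eq_norm,
    (isCompact_closedBall 0 1).sSup_lt_iff_of_continuous ⟨0, by simp⟩ (by fun_prop)]
  intro x hx
  set y := U.starProjection x
  have hy : ‖y‖ ≤ 1 := (U.norm_starProjection_apply_le x).trans (mem_closedBall_zero_iff.1 hx)
  change ‖y - V.starProjection y‖ < 1
  by_cases hVy : V.starProjection y = 0
  · have hy0 : y = 0 := (Submodule.eq_bot_iff _).1 h y
      ⟨U.starProjection_apply_mem x, (Submodule.starProjection_apply_eq_zero_iff V).1 hVy⟩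
    simp [hy0]
  · have hpyth := V.norm_sq_eq_add_norm_sq_starProjection y
    rw [Submodule.starProjection_orthogonal_val] at hpyth
    have hVy_pos : 0 < ‖V.starProjection y‖ := norm_pos_iff.2 hVy
    have hy_sq : ‖y‖ ^ 2 ≤ 1 := pow_le_one₀ (norm_nonneg y) hy
    nlinarith [norm_nonneg (y - V.starProjection y)]

lemma exists_lt_one_forall_gap_le {K : Set (Submodule ℝ E)} (hK : IsCompact (projCLM '' K))
    (h : ∀ V ∈ K, gap U V < 1) : ∃ δ < 1, ∀ V ∈ K, gap U V ≤ δ := by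
  rcases K.eq_empty_or_nonempty with rfl | hne
  · exact ⟨0, one_pos, by simp⟩
  have hcont : Continuous fun P : E →L[ℝ] E => ‖projCLM U - P.comp (projCLM U)‖ := by fun_prop
  obtain ⟨_, ⟨V₀, hV₀, rfl⟩, hmax⟩ := hK.exists_isMaxOn (hne.image _) hcont.continuousOn
  exact ⟨gap U V₀, h V₀ hV₀, fun V hV => hmax (Set.mem_image_of_mem _ hV)⟩

lemma exists_mem_starProjection_eq_of_gap_le {δ : ℝ} (hδ : gap U V ≤ δ)
    (hδ1 : δ < 1) {u : E} (hu : u ∈ U) :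
    ∃ v ∈ V, U.starProjection v = u ∧ ‖v‖ ≤ (1 - δ)⁻¹ * ‖u‖ := by
  set T : U →L[ℝ] U := U.orthogonalProjectionOnto ∘L V.starProjection ∘L U.subtypeL
  have hN : ‖1 - T‖ ≤ δ := by
    refine ContinuousLinearMap.opNorm_le_bound _ ((norm_nonneg _).trans hδ) fun z => ?_
    calc ‖(1 - T) z‖ = ‖U.starProjection ((z : E) - V.starProjection z)‖ := by
          rw [map_sub, Submodule.starProjection_mem_subspace_eq_self]
          rfl
      _ ≤ ‖(z : E) - V.starProjection z‖ := U.norm_starProjection_apply_le _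
      _ ≤ gap U V * ‖z‖ := norm_sub_starProjection_le_gap_mul z.2
      _ ≤ δ * ‖z‖ := by gcongr
  have hN1 : ‖1 - T‖ < 1 := hN.trans_lt hδ1
  set z := (∑' n : ℕ, (1 - T) ^ n) ⟨u, hu⟩
  have hTz : T z = ⟨u, hu⟩ := by
    have hinv := mul_neg_geom_series (1 - T) hN1
    rw [sub_sub_cancel] at hinv
    rw [← mul_apply_eq_comp, hinv, one_apply_eq_self]
  refine ⟨V.starProjection z, V.starProjection_apply_mem _, congrArg Subtype.val hTz, ?_⟩
  have hsum : ‖∑' n : ℕ, (1 - T) ^ n‖ ≤ (1 - δ)⁻¹ :=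
    calc ‖∑' n : ℕ, (1 - T) ^ n‖ ≤ ‖(1 : U →L[ℝ] U)‖ - 1 + (1 - ‖1 - T‖)⁻¹ :=
          tsum_geometric_le_of_norm_lt_one (1 - T) hN1
      _ ≤ (1 - δ)⁻¹ := by
          have hone : ‖(1 : U →L[ℝ] U)‖ ≤ 1 := ContinuousLinearMap.norm_id_le
          have : (1 - ‖1 - T‖)⁻¹ ≤ (1 - δ)⁻¹ := by gcongr
          linarith
  calc ‖V.starProjection z‖ ≤ ‖z‖ := V.norm_starProjection_apply_le _
    _ ≤ ‖∑' n : ℕ, (1 - T) ^ n‖ * ‖u‖ := ContinuousLinearMap.le_opNorm _ _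
    _ ≤ (1 - δ)⁻¹ * ‖u‖ := by gcongr

end Gap

theorem gap_exp_flow_decay_uniform_general (A : E →L[ℝ] E) (hA : IsSelfAdjoint A)
    (hzero : ¬ Module.End.HasEigenvalue (A : E →ₗ[ℝ] E) 0)
    (mp mm : ℝ)
    (hmp : IsLeast {μ : ℝ | 0 < μ ∧ Module.End.HasEigenvalue (A : E →ₗ[ℝ] E) μ} mp)
    (hmm : IsLeast {μ : ℝ | 0 < μ ∧ Module.End.HasEigenvalue (-(A : E →ₗ[ℝ] E)) μ} mm)
    (K : Set (Submodule ℝ E))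
    (hKcpt : IsCompact (projCLM '' K))
    (hKtrans : ∀ V ∈ K, posSpace A ⊓ Vᗮ = ⊥) :
    ∃ C : ℝ, 0 < C ∧ ∀ V ∈ K, ∀ t : ℝ, 0 ≤ t →
      gap (posSpace A) (Submodule.map (expEnd (t • A) : E →ₗ[ℝ] E) V)
        ≤ C * Real.exp (-(mp + mm) * t) := by
  obtain ⟨δ, hδ1, hδ⟩ := exists_lt_one_forall_gap_le hKcpt fun V hV =>
    gap_lt_one_of_inf_orthogonal_eq_bot (hKtrans V hV)
  refine ⟨(1 - δ)⁻¹, inv_pos.2 (sub_pos.2 hδ1), fun V hV t ht => ?_⟩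
  refine gap_le_of_forall_exists_norm_sub_le (by positivity) fun y hy => ?_
  set u := expEnd ((-t) • A) y
  obtain ⟨v, hvV, hvu, hv⟩ :=
    exists_mem_starProjection_eq_of_gap_le (hδ V hV) hδ1 (hA.expEnd_smul_mem_posSpace (-t) hy)
  have huv : u - v = -(posSpace A)ᗮ.starProjection v := by
    rw [Submodule.starProjection_orthogonal_val, hvu, neg_sub]
  refine ⟨expEnd (t • A) v, Submodule.mem_map_of_mem hvV, ?_⟩
  calc ‖y - expEnd (t • A) v‖ = ‖expEnd (t • A) (u - v)‖ := by
        rw [map_sub, expEnd_smul_expEnd_neg_smul_apply]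
    _ ≤ Real.exp (-(mm * t)) * ‖u - v‖ :=
        hA.norm_expEnd_smul_le_of_mem_orthogonal_posSpace
          (fun μ hμ hμA => le_neg_of_isLeast_hasEigenvalue_neg hzero hmm hμ hμA) ht
          (huv ▸ neg_mem (Submodule.starProjection_apply_mem _ v))
    _ ≤ Real.exp (-(mm * t)) * ((1 - δ)⁻¹ * (Real.exp (-(mp * t)) * ‖y‖)) := by
        rw [huv, norm_neg]
        gcongr
        calc _ ≤ ‖v‖ := Submodule.norm_starProjection_apply_le _ v
          _ ≤ (1 - δ)⁻¹ * ‖u‖ := hv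
          _ ≤ _ := by
            gcongr
            exact hA.norm_expEnd_neg_smul_le_of_mem_posSpace (fun μ h h' => hmp.2 ⟨h, h'⟩) ht hy
    _ = (1 - δ)⁻¹ * Real.exp (-(mp + mm) * t) * ‖y‖ := by
        rw [show -(mp + mm) * t = -(mm * t) + -(mp * t) by ring, Real.exp_add]
        ring

/-- Let `A` be a symmetric endomorphism with at least one positive and one negative
eigenvalue and no zero eigenvalue, `U` the sum of eigenspaces for positive eigenvalues,
`m₊(A)`, `m₋(A)` the smallest positive eigenvalues of `A`, `−A`.  Let `dim U ≤ ℓ ≤ dim E`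
and let `K` be a set of `ℓ`-dimensional subspaces such that `{P_V : V ∈ K}` is compact and
every `V ∈ K` satisfies `U ∩ V⊥ = 0`.  Then there is `C > 0` with
`δ(U, exp(tA)V) ≤ C e^{−(m₊(A)+m₋(A))t}` for all `V ∈ K`, `t ≥ 0`. -/
theorem gap_exp_flow_decay_uniform (A : E →L[ℝ] E) (hA : IsSelfAdjoint A)
    (hpos : ∃ μ : ℝ, 0 < μ ∧ Module.End.HasEigenvalue (A : E →ₗ[ℝ] E) μ)
    (hneg : ∃ μ : ℝ, μ < 0 ∧ Module.End.HasEigenvalue (A : E →ₗ[ℝ] E) μ)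
    (hzero : ¬ Module.End.HasEigenvalue (A : E →ₗ[ℝ] E) 0)
    (mp mm : ℝ)
    (hmp : IsLeast {μ : ℝ | 0 < μ ∧ Module.End.HasEigenvalue (A : E →ₗ[ℝ] E) μ} mp)
    (hmm : IsLeast {μ : ℝ | 0 < μ ∧ Module.End.HasEigenvalue (-(A : E →ₗ[ℝ] E)) μ} mm)
    (ℓ : ℕ) (hl1 : finrank ℝ (posSpace A) ≤ ℓ) (hl2 : ℓ ≤ finrank ℝ E)
    (K : Set (Submodule ℝ E))
    (hKdim : ∀ V ∈ K, finrank ℝ V = ℓ)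
    (hKcpt : IsCompact (projCLM '' K))
    (hKtrans : ∀ V ∈ K, posSpace A ⊓ Vᗮ = ⊥) :
    ∃ C : ℝ, 0 < C ∧ ∀ V ∈ K, ∀ t : ℝ, 0 ≤ t →
      gap (posSpace A) (Submodule.map (expEnd (t • A) : E →ₗ[ℝ] E) V)
        ≤ C * Real.exp (-(mp + mm) * t) :=
  gap_exp_flow_decay_uniform_general A hA hzero mp mm hmp hmm K hKcpt hKtrans
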